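/- arXiv:2001.00845 — 3 statements merged into one kernel-verified Lean document; each statement's English description precedes it below -/
import Mathlib

section
/- For every pair of unitary operators U and V on a Hilbert space, the Hausdorff distance between their spectra is bounded by the operator norm of their difference: d_H(σ(U), σ(V)) ≤ ‖U − V‖. -/
/-!
If `z ∈ σ(a)` lies at distance `d > 0` from `σ(b)`, then `z - b` is invertible, and since `b` is
normal, `‖(z - b)⁻¹‖` equals the spectral radius of `(z - b)⁻¹`, which is at most `1 / d`.
Were `‖a - b‖ < d`, the factorisation `z - a = (z - b) (1 - (z - b)⁻¹ (a - b))` and a Neumann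
series would make `z - a` invertible. Working in `ℝ≥0∞` avoids dividing by `d`.
-/

open Metric ENNReal

theorem IsStarNormal.algebraMap_sub {R A : Type*} [CommRing R] [StarRing R] [Ring A] [StarRing A]
    [Algebra R A] [StarModule R A] (r : R) (b : A) [IsStarNormal b] :
    IsStarNormal (algebraMap R A r - b) :=
  have : IsStarNormal (algebraMap R A r) :=
    ⟨by rw [← algebraMap_star_comm]; exact Algebra.commute_algebraMap_left _ _⟩
  (Algebra.commute_algebraMap_left r (star b)).isStarNormal_sub

namespace spectrum

variable {𝕜 A : Type*} [NormedField 𝕜] [NormedRing A] [NormedAlgebra 𝕜 A]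

theorem resolvent_eq_val_inv {a : A} {z : 𝕜} (u : Aˣ) (hu : (u : A) = algebraMap 𝕜 A z - a) :
    resolvent a z = ↑u⁻¹ := by
  rw [resolvent, ← hu, Ring.inverse_unit]

theorem spectralRadius_resolvent_le {a : A} {z : 𝕜} (hz : z ∉ spectrum 𝕜 a) :
    spectralRadius 𝕜 (resolvent a z) ≤ (infEDist z (spectrum 𝕜 a))⁻¹ := by
  obtain ⟨u, hu⟩ := notMem_iff.mp hz
  rw [resolvent_eq_val_inv u hu, spectralRadius, ← spectrum.map_inv, hu, ← singleton_sub_eq,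
    Set.singleton_sub]
  refine iSup₂_le fun k hk => ?_
  obtain ⟨w, hw, hzw⟩ := Set.mem_inv.mp hk
  calc (‖k‖₊ : ℝ≥0∞) ≤ (‖k⁻¹‖₊ : ℝ≥0∞)⁻¹ := by
        rcases eq_or_ne k 0 with rfl | hk0
        · simp
        · rw [nnnorm_inv, ENNReal.coe_inv (nnnorm_ne_zero_iff.mpr hk0), inv_inv]
    _ = (edist z w)⁻¹ := by rw [← hzw, edist_eq_enorm_sub, enorm_eq_nnnorm]
    _ ≤ (infEDist z (spectrum 𝕜 a))⁻¹ := ENNReal.inv_le_inv' (infEDist_le_edist_of_mem hw)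

theorem one_le_enorm_resolvent_mul_enorm_sub [CompleteSpace A] {a b : A} {z : 𝕜}
    (ha : z ∈ spectrum 𝕜 a) (hb : z ∉ spectrum 𝕜 b) :
    1 ≤ ‖resolvent b z‖ₑ * ‖a - b‖ₑ := by
  by_contra! h
  have hsmall : ‖resolvent b z * (a - b)‖₊ < 1 :=
    (nnnorm_mul_le _ _).trans_lt (by simpa [enorm_eq_nnnorm, ← ENNReal.coe_mul] using h)
  obtain ⟨u, hu⟩ := notMem_iff.mp hb
  have hfactor : algebraMap 𝕜 A z - a = u * (1 - resolvent b z * (a - b)) := by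
    rw [mul_sub, mul_one, ← mul_assoc, resolvent_eq_val_inv u hu, Units.mul_inv, one_mul, hu]
    abel
  exact ha (mem_resolventSet_iff.mpr (hfactor ▸ u.isUnit.mul (Units.oneSub _ hsmall).isUnit))

end spectrum

section CStarAlgebra

variable {A : Type*} [CStarAlgebra A]

theorem IsStarNormal.enorm_resolvent_le {b : A} [IsStarNormal b] {z : ℂ}
    (hz : z ∉ spectrum ℂ b) :
    ‖resolvent b z‖ₑ ≤ (infEDist z (spectrum ℂ b))⁻¹ := by
  obtain ⟨u, hu⟩ := spectrum.notMem_iff.mp hz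
  have : IsStarNormal (u : A) := hu ▸ IsStarNormal.algebraMap_sub z b
  rw [spectrum.resolvent_eq_val_inv u hu, enorm_eq_nnnorm,
    ← IsStarNormal.spectralRadius_eq_nnnorm, ← spectrum.resolvent_eq_val_inv u hu]
  exact spectrum.spectralRadius_resolvent_le hz

theorem infEDist_spectrum_le_enorm_sub {a b : A} [IsStarNormal b] {z : ℂ}
    (hz : z ∈ spectrum ℂ a) : infEDist z (spectrum ℂ b) ≤ ‖a - b‖ₑ := by
  by_cases hb : z ∈ spectrum ℂ b
  · simp [infEDist_zero_of_mem hb]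
  set d := infEDist z (spectrum ℂ b)
  calc d ≤ d * (‖resolvent b z‖ₑ * ‖a - b‖ₑ) :=
        le_mul_of_one_le_right' (spectrum.one_le_enorm_resolvent_mul_enorm_sub hz hb)
    _ ≤ d * (d⁻¹ * ‖a - b‖ₑ) := by gcongr; exact IsStarNormal.enorm_resolvent_le hb
    _ ≤ ‖a - b‖ₑ := by
        rw [← mul_assoc]
        exact mul_le_of_le_one_left' (ENNReal.mul_inv_le_one d)

theorem hausdorffEDist_spectrum_le_enorm_sub (a b : A) [IsStarNormal a] [IsStarNormal b] :
    hausdorffEDist (spectrum ℂ a) (spectrum ℂ b) ≤ ‖a - b‖ₑ :=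
  hausdorffEDist_le_of_infEDist (fun _ hz => infEDist_spectrum_le_enorm_sub hz)
    fun _ hz => enorm_sub_rev a b ▸ infEDist_spectrum_le_enorm_sub hz

end CStarAlgebra

/-- For every pair of unitary operators `U` and `V` on a complex Hilbert space,
the Hausdorff distance between their spectra is bounded by `‖U - V‖`. -/
theorem hausdorffDist_spectrum_le_norm_sub
    {H : Type*} [NormedAddCommGroup H] [InnerProductSpace ℂ H] [CompleteSpace H]
    (U V : H →L[ℂ] H)
    (hU : U ∈ unitary (H →L[ℂ] H)) (hV : V ∈ unitary (H →L[ℂ] H)) :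
    Metric.hausdorffDist (spectrum ℂ U) (spectrum ℂ V) ≤ ‖U - V‖ := by
  have := isStarNormal_of_mem_unitary hU
  have := isStarNormal_of_mem_unitary hV
  refine toReal_le_of_le_ofReal (norm_nonneg _) ?_
  rw [ofReal_norm]
  exact hausdorffEDist_spectrum_le_enorm_sub U V
end

section
/- Let μ be a finite Borel measure on the circle ∂𝔻 and S a countable dense subset of ∂𝔻. Let 𝒥 be the countable collection of all finite unions of open arcs with endpoints in S, and 𝒥_ε = {J ∈ 𝒥 : Leb(J) < ε}. Then for every Borel set B, the singular part μ_s of μ (with respect to Lebesgue measure on ∂𝔻) satisfies μ_s(B) = lim_{ε→0} sup_{J ∈ 𝒥_ε} μ(B ∩ J). -/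
/-!
The singular part lives on a Lebesgue-null set, which by outer regularity of Lebesgue measure
sits inside open sets of arbitrarily small length; each such open set is exhausted by an
increasing sequence of finite unions of arcs with endpoints in `S` (density of `S` and
Lindelöf), so `μ_s(B)` is below the supremum for every `ε`. Conversely, on a set `J` of small
length `μ(B ∩ J) ≤ μ_s(B) + ∫_J dμ/dLeb`, and the integral of the integrable density is
uniformly small on sets of small measure.
-/

open MeasureTheory Filter

instance : Fact (0 < 2 * Real.pi) := ⟨by positivity⟩

/-- `J` is a finite union of open arcs of the circle with endpoints in `S`. -/
def IsFiniteArcUnion (S : Set (AddCircle (2 * Real.pi)))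
    (J : Set (AddCircle (2 * Real.pi))) : Prop :=
  ∃ (n : ℕ) (a b : Fin n → ℝ),
    (∀ i, ((a i : AddCircle (2 * Real.pi)) ∈ S ∧ (b i : AddCircle (2 * Real.pi)) ∈ S)) ∧
    J = ⋃ i, (fun x : ℝ => (x : AddCircle (2 * Real.pi))) '' Set.Ioo (a i) (b i)

open Set
open scoped ENNReal

section Decomposition

variable {X : Type*} [MeasurableSpace X] (μ ν : Measure X)

lemma exists_isOpen_measure_lt_singularPart_le [TopologicalSpace X] [ν.OuterRegular]
    (B : Set X) {ε : ℝ≥0∞} (hε : 0 < ε) :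
    ∃ U, IsOpen U ∧ ν U < ε ∧ μ.singularPart ν B ≤ μ (B ∩ U) := by
  obtain ⟨s, -, hμs, hνs⟩ := μ.mutuallySingular_singularPart ν
  obtain ⟨U, hsU, hU, hνU⟩ := sᶜ.exists_isOpen_lt_of_lt ε (hνs ▸ hε)
  refine ⟨U, hU, hνU, ?_⟩
  calc μ.singularPart ν B = μ.singularPart ν (B \ s) := (measure_sdiff_null hμs).symm
    _ ≤ μ (B \ s) := Measure.singularPart_le μ ν _
    _ ≤ μ (B ∩ U) := measure_mono (inter_subset_inter_right B hsU)

lemma exists_pos_forall_measure_inter_le_singularPart_add [IsFiniteMeasure μ]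
    [μ.HaveLebesgueDecomposition ν] (B : Set X) {δ : ℝ≥0∞} (hδ : 0 < δ) :
    ∃ η > 0, ∀ J, MeasurableSet J → ν J < η → μ (B ∩ J) ≤ μ.singularPart ν B + δ := by
  obtain ⟨η, hη, hsmall⟩ := exists_pos_setLIntegral_lt_of_measure_lt
    (Measure.lintegral_rnDeriv_lt_top μ ν).ne hδ.ne'
  refine ⟨η, hη, fun J hJ hνJ => ?_⟩
  conv_lhs => rw [← μ.singularPart_add_rnDeriv ν]
  calc μ.singularPart ν (B ∩ J) + ν.withDensity (μ.rnDeriv ν) (B ∩ J)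
      ≤ μ.singularPart ν B + ν.withDensity (μ.rnDeriv ν) J :=
        add_le_add (measure_mono inter_subset_left) (measure_mono inter_subset_right)
    _ ≤ μ.singularPart ν B + δ := by
        rw [withDensity_apply _ hJ]
        exact add_le_add_right (hsmall J hνJ).le _

end Decomposition

lemma exists_arc_mem_subset {T : ℝ} {S : Set (AddCircle T)} (hS : Dense S)
    {U : Set (AddCircle T)} (hU : IsOpen U) {x : AddCircle T} (hx : x ∈ U) :
    ∃ a b : ℝ, ((a : AddCircle T) ∈ S ∧ (b : AddCircle T) ∈ S) ∧
      x ∈ ((↑) : ℝ → AddCircle T) '' Ioo a b ∧ ((↑) : ℝ → AddCircle T) '' Ioo a b ⊆ U := by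
  obtain ⟨x, rfl⟩ := QuotientAddGroup.mk_surjective x
  have hS' : Dense (((↑) : ℝ → AddCircle T) ⁻¹' S) :=
    hS.preimage QuotientAddGroup.isOpenMap_coe
  obtain ⟨δ, hδ, hball⟩ := Metric.isOpen_iff.1 (hU.preimage continuous_quotient_mk') x hx
  obtain ⟨a, haS, ha⟩ := hS'.exists_between (sub_lt_self x hδ)
  obtain ⟨b, hbS, hb⟩ := hS'.exists_between (lt_add_of_pos_right x hδ)
  refine ⟨a, b, ⟨haS, hbS⟩, ⟨x, ⟨ha.2, hb.1⟩, rfl⟩, ?_⟩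
  rw [image_subset_iff]
  refine Subset.trans (Ioo_subset_Ioo ha.1.le hb.2.le) ?_
  rwa [← Real.ball_eq_Ioo]

lemma exists_seq_arcs_iUnion_eq {T : ℝ} {S : Set (AddCircle T)} (hS : Dense S)
    {U : Set (AddCircle T)} (hU : IsOpen U) (hne : U.Nonempty) :
    ∃ a b : ℕ → ℝ, (∀ n, (a n : AddCircle T) ∈ S ∧ (b n : AddCircle T) ∈ S) ∧
      ⋃ n, ((↑) : ℝ → AddCircle T) '' Ioo (a n) (b n) = U := by
  let arcs : Set (ℝ × ℝ) := {p | ((p.1 : AddCircle T) ∈ S ∧ (p.2 : AddCircle T) ∈ S) ∧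
    ((↑) : ℝ → AddCircle T) '' Ioo p.1 p.2 ⊆ U}
  have hcover : ⋃ p ∈ arcs, ((↑) : ℝ → AddCircle T) '' Ioo p.1 p.2 = U := by
    refine Subset.antisymm (iUnion₂_subset fun p hp => hp.2) fun x hx => ?_
    obtain ⟨a, b, hab, hx, hsub⟩ := exists_arc_mem_subset hS hU hx
    exact mem_biUnion (x := (a, b)) ⟨hab, hsub⟩ hx
  obtain ⟨C, hCarcs, hC, hCU⟩ := TopologicalSpace.isOpen_biUnion_countable arcs
    (fun p : ℝ × ℝ => ((↑) : ℝ → AddCircle T) '' Ioo p.1 p.2)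
    fun _ _ => QuotientAddGroup.isOpenMap_coe _ isOpen_Ioo
  rw [hcover] at hCU
  have hCne : C.Nonempty := by
    by_contra! h
    simp [h, eq_comm, ← not_nonempty_iff_eq_empty, hne] at hCU
  obtain ⟨f, rfl⟩ := hC.exists_eq_range hCne
  exact ⟨fun n => (f n).1, fun n => (f n).2, fun n => (hCarcs ⟨n, rfl⟩).1,
    by rwa [biUnion_range] at hCU⟩

lemma IsFiniteArcUnion.isOpen {S J : Set (AddCircle (2 * Real.pi))}
    (h : IsFiniteArcUnion S J) : IsOpen J := by
  obtain ⟨n, a, b, -, rfl⟩ := h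
  exact isOpen_iUnion fun i => QuotientAddGroup.isOpenMap_coe _ isOpen_Ioo

lemma measure_inter_le_iSup_finiteArcUnion_subset (μ : Measure (AddCircle (2 * Real.pi)))
    {S U : Set (AddCircle (2 * Real.pi))} (hS : Dense S) (hU : IsOpen U)
    (B : Set (AddCircle (2 * Real.pi))) :
    μ (B ∩ U) ≤ ⨆ (J) (_ : IsFiniteArcUnion S J ∧ J ⊆ U), μ (B ∩ J) := by
  rcases U.eq_empty_or_nonempty with rfl | hne
  · simp
  obtain ⟨a, b, hab, hU⟩ := exists_seq_arcs_iUnion_eq hS hU hne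
  let K : ℕ → Set (AddCircle (2 * Real.pi)) := fun n =>
    ⋃ i : Fin (n + 1), ((↑) : ℝ → AddCircle (2 * Real.pi)) '' Ioo (a i) (b i)
  have hK_mono : Monotone K := fun n m hnm =>
    iUnion_subset fun i => subset_iUnion_of_subset ⟨i, by omega⟩ subset_rfl
  have hK_iUnion : ⋃ n, K n = U := by
    refine Subset.antisymm (iUnion_subset fun n => iUnion_subset fun i => ?_) fun x hx => ?_
    · exact hU ▸ subset_iUnion_of_subset (i : ℕ) subset_rfl
    · obtain ⟨n, hn⟩ := mem_iUnion.1 (hU ▸ hx)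
      exact mem_iUnion_of_mem n (mem_iUnion_of_mem (⟨n, n.lt_succ_self⟩ : Fin (n + 1)) hn)
  calc μ (B ∩ U) = ⨆ n, μ (B ∩ K n) := by
        rw [← hK_iUnion, inter_iUnion]
        exact (monotone_const.inter hK_mono).measure_iUnion
    _ ≤ _ := iSup_le fun n => le_iSup₂_of_le (K n)
        ⟨⟨n + 1, fun i => a i, fun i => b i, fun i => hab i, rfl⟩, hK_iUnion ▸ subset_iUnion K n⟩
        le_rfl

lemma singularPart_le_iSup_small_finiteArcUnion (μ : Measure (AddCircle (2 * Real.pi)))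
    {S : Set (AddCircle (2 * Real.pi))} (hS : Dense S) (B : Set (AddCircle (2 * Real.pi)))
    {ε : ℝ} (hε : 0 < ε) :
    μ.singularPart volume B ≤ ⨆ (J) (_ : IsFiniteArcUnion S J ∧ volume J < ENNReal.ofReal ε),
      μ (B ∩ J) := by
  obtain ⟨U, hU, hUε, hB⟩ :=
    exists_isOpen_measure_lt_singularPart_le μ volume B (ENNReal.ofReal_pos.2 hε)
  refine hB.trans <| (measure_inter_le_iSup_finiteArcUnion_subset μ hS hU B).trans <|
    iSup₂_mono' fun J hJ => ⟨J, ⟨hJ.1, (measure_mono hJ.2).trans_lt hUε⟩, le_rfl⟩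

theorem singularPart_eq_limit_sup_over_small_arc_unions_general
    (μ : Measure (AddCircle (2 * Real.pi))) [IsFiniteMeasure μ]
    (S : Set (AddCircle (2 * Real.pi))) (hSdense : Dense S)
    (B : Set (AddCircle (2 * Real.pi))) :
    Tendsto
      (fun ε : ℝ =>
        ⨆ (J : Set (AddCircle (2 * Real.pi)))
          (_ : IsFiniteArcUnion S J ∧ volume J < ENNReal.ofReal ε), μ (B ∩ J))
      (nhdsWithin 0 (Set.Ioi 0))
      (nhds (Measure.singularPart μ volume B)) := by
  have hfin : μ.singularPart volume B ≠ ⊤ :=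
    ((Measure.singularPart_le μ volume B).trans_lt (measure_lt_top μ B)).ne
  refine (ENNReal.tendsto_nhds hfin).2 fun δ hδ => ?_
  obtain ⟨η, hη, hsmall⟩ :=
    exists_pos_forall_measure_inter_le_singularPart_add μ volume B hδ
  obtain ⟨r, -, hr, hrη⟩ := ENNReal.lt_iff_exists_real_btwn.1 hη
  filter_upwards [Ioc_mem_nhdsGT (ENNReal.ofReal_pos.1 hr)] with ε hε
  refine ⟨tsub_le_self.trans (singularPart_le_iSup_small_finiteArcUnion μ hSdense B hε.1),
    iSup₂_le fun J hJ => hsmall J hJ.1.isOpen.measurableSet ?_⟩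
  calc volume J < ENNReal.ofReal ε := hJ.2
    _ ≤ ENNReal.ofReal r := ENNReal.ofReal_le_ofReal hε.2
    _ < η := hrη

/-- For a finite Borel measure `μ` on the circle and a countable dense set `S` of endpoints,
the singular part of `μ` with respect to Lebesgue measure satisfies
`μ_s(B) = lim_{ε→0⁺} sup { μ(B ∩ J) : J a finite union of arcs with endpoints in S, Leb(J) < ε }`. -/
theorem singularPart_eq_limit_sup_over_small_arc_unions
    (μ : Measure (AddCircle (2 * Real.pi))) [IsFiniteMeasure μ]
    (S : Set (AddCircle (2 * Real.pi))) (hScount : S.Countable) (hSdense : Dense S)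
    (B : Set (AddCircle (2 * Real.pi))) (hB : MeasurableSet B) :
    Tendsto
      (fun ε : ℝ =>
        ⨆ (J : Set (AddCircle (2 * Real.pi)))
          (_ : IsFiniteArcUnion S J ∧ volume J < ENNReal.ofReal ε), μ (B ∩ J))
      (nhdsWithin 0 (Set.Ioi 0))
      (nhds (Measure.singularPart μ volume B)) :=
  singularPart_eq_limit_sup_over_small_arc_unions_general μ S hSdense B
end

section
/- Let Ω be a compact metric space, T : Ω → Ω a minimal homeomorphism, and ω ↦ U_ω a map into bounded operators on ℓ²(ℤ) satisfying the covariance relation U_{Tω} = S U_ω S* (S the bilateral shift) and strong continuity: ωₙ → ω implies U_{ωₙ} → U_ω strongly together with U_{ωₙ}* → U_ω* strongly. Then σ(U_ω) is independent of ω ∈ Ω. -/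
/-!
If `z ∉ σ(U ω₁)`, the operators `z - U ω` and `(z - U ω)*` are bounded below at `ω = ω₁`,
say `‖ψ‖ ≤ C ‖(z - U ω) ψ‖`. Covariance makes `z - U (T ω)` the conjugate of `z - U ω` by the
unitary `S`, which changes no such bound, so the bounds hold along the whole orbit of `ω₁`.
A bound of this form passes to strong limits, so it holds on the closure of the orbit, which is
everything by minimality. On a Hilbert space an operator which is bounded below together with
its adjoint is invertible, hence `z ∉ σ(U ω₂)`.
-/

open Filter Topology NNReal ContinuousLinearMap

section BoundedBelow

variable {E F : Type*} [SeminormedAddCommGroup E] [SeminormedAddCommGroup F]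

def IsBoundedBelowWith (C : ℝ≥0) (f : E → F) : Prop :=
  ∀ x, ‖x‖ ≤ C * ‖f x‖

theorem IsBoundedBelowWith.of_tendsto {ι : Type*} {l : Filter ι} [l.NeBot] {C : ℝ≥0}
    {f : ι → E → F} {g : E → F} (hf : ∀ᶠ i in l, IsBoundedBelowWith C (f i))
    (hlim : ∀ x, Tendsto (fun i => f i x) l (𝓝 (g x))) : IsBoundedBelowWith C g := fun x =>
  ge_of_tendsto ((hlim x).norm.const_mul (C : ℝ)) (hf.mono fun _ hi => hi x)

theorem IsUnit.isBoundedBelowWith {𝕜 : Type*} [NontriviallyNormedField 𝕜] [NormedSpace 𝕜 E]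
    {B : E →L[𝕜] E} (hB : IsUnit B) : ∃ C, IsBoundedBelowWith C B := by
  obtain ⟨u, rfl⟩ := hB
  refine ⟨‖(↑u⁻¹ : E →L[𝕜] E)‖₊, fun x => ?_⟩
  calc ‖x‖ = ‖(↑u⁻¹ : E →L[𝕜] E) ((u : E →L[𝕜] E) x)‖ := by
        rw [← mul_apply_eq_comp, Units.inv_mul, one_apply_eq_self]
    _ ≤ _ := le_opNorm _ _

end BoundedBelow

section Hilbert

variable {𝕜 H : Type*} [RCLike 𝕜] [NormedAddCommGroup H] [InnerProductSpace 𝕜 H] [CompleteSpace H]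

theorem isBoundedBelowWith_conjStarAlgAut_iff (W : unitary (H →L[𝕜] H)) {C : ℝ≥0}
    {B : H →L[𝕜] H} :
    IsBoundedBelowWith C (Unitary.conjStarAlgAut 𝕜 _ W B) ↔ IsBoundedBelowWith C B := by
  have hsurj : Function.Surjective (star W : H →L[𝕜] H) := fun x =>
    ⟨(W : H →L[𝕜] H) x, by rw [← mul_apply_eq_comp, Unitary.star_mul_self_of_mem W.prop,
      one_apply_eq_self]⟩
  simp only [IsBoundedBelowWith, Unitary.conjStarAlgAut_apply, mul_apply_eq_comp,
    Unitary.norm_map]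
  conv_rhs => rw [hsurj.forall]
  simp only [norm_map_of_mem_unitary (Unitary.star_mem W.prop)]

theorem isUnit_of_isBoundedBelowWith_of_star {B : H →L[𝕜] H} {C₁ C₂ : ℝ≥0}
    (hB : IsBoundedBelowWith C₁ B) (hB' : IsBoundedBelowWith C₂ ⇑(star B)) : IsUnit B := by
  rw [isUnit_iff_bijective, bijective_iff_dense_range_and_antilipschitz]
  refine ⟨?_, C₁, B.antilipschitz_of_bound hB⟩
  rw [Submodule.topologicalClosure_eq_top_iff, orthogonal_range,
    ← star_eq_adjoint, LinearMap.ker_eq_bot]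
  exact ((star B).antilipschitz_of_bound hB').injective

end Hilbert

theorem Equiv.Perm.zpow_apply_mem_iff {α : Type*} {T : Equiv.Perm α} {s : Set α}
    (hT : ∀ x, T x ∈ s ↔ x ∈ s) (n : ℤ) (x : α) : (T ^ n) x ∈ s ↔ x ∈ s := by
  induction n using Int.induction_on generalizing x with
  | zero => rfl
  | succ n ih => rw [zpow_add_one, Perm.mul_apply, ih, hT]
  | pred n ih =>
    rw [zpow_sub_one, Perm.mul_apply, ih, ← hT, ← Perm.mul_apply, mul_inv_cancel, Perm.one_apply]

theorem eq_univ_of_isClosed_of_dense_orbit {Ω : Type*} [TopologicalSpace Ω] {T : Equiv.Perm Ω}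
    {s : Set Ω} (hs : IsClosed s) (hT : ∀ x, T x ∈ s ↔ x ∈ s) {ω : Ω} (hω : ω ∈ s)
    (hdense : Dense {x | ∃ n : ℤ, x = (T ^ n) ω}) : s = Set.univ := by
  refine Set.eq_univ_of_univ_subset (hdense.closure_eq ▸ closure_minimal ?_ hs)
  rintro _ ⟨n, rfl⟩
  exact (Equiv.Perm.zpow_apply_mem_iff hT n ω).mpr hω

theorem spectrum_subset_of_covariant_of_dense_orbit {Ω H : Type*} [TopologicalSpace Ω]
    [SequentialSpace Ω] [NormedAddCommGroup H] [InnerProductSpace ℂ H] [CompleteSpace H]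
    {T : Equiv.Perm Ω} {ω₁ : Ω} (hmin : Dense {x : Ω | ∃ n : ℤ, x = (T ^ n) ω₁})
    (S : unitary (H →L[ℂ] H)) {U : Ω → H →L[ℂ] H}
    (hcov : ∀ ω, U (T ω) = Unitary.conjStarAlgAut ℂ _ S (U ω))
    (hstrong : ∀ (ωn : ℕ → Ω) (ω : Ω), Tendsto ωn atTop (𝓝 ω) → ∀ ψ : H,
      Tendsto (fun n => U (ωn n) ψ) atTop (𝓝 (U ω ψ)) ∧
      Tendsto (fun n => (star (U (ωn n))) ψ) atTop (𝓝 ((star (U ω)) ψ)))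
    (ω₂ : Ω) : spectrum ℂ (U ω₂) ⊆ spectrum ℂ (U ω₁) := by
  intro z
  contrapose
  simp only [spectrum.notMem_iff]
  set A := algebraMap ℂ (H →L[ℂ] H) z
  intro hunit
  obtain ⟨C₁, h₁⟩ := hunit.isBoundedBelowWith
  obtain ⟨C₂, h₂⟩ := hunit.star.isBoundedBelowWith
  set s := {ω | IsBoundedBelowWith C₁ ⇑(A - U ω) ∧ IsBoundedBelowWith C₂ ⇑(star (A - U ω))}
  have hs : IsClosed s := IsSeqClosed.isClosed fun {ωn ω} hmem hlim => by
    refine ⟨.of_tendsto (l := atTop) (.of_forall fun k => (hmem k).1) fun ψ => ?_,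
      .of_tendsto (l := atTop) (.of_forall fun k => (hmem k).2) fun ψ => ?_⟩
    · simpa only [sub_apply] using tendsto_const_nhds.sub (hstrong ωn ω hlim ψ).1
    · simpa only [star_sub, sub_apply] using tendsto_const_nhds.sub (hstrong ωn ω hlim ψ).2
  have hT : ∀ ω, T ω ∈ s ↔ ω ∈ s := by
    intro ω
    have hconj : A - U (T ω) = Unitary.conjStarAlgAut ℂ _ S (A - U ω) := by
      rw [hcov, map_sub, AlgHomClass.commutes]
    have hconj_star : star (A - U (T ω)) = Unitary.conjStarAlgAut ℂ _ S (star (A - U ω)) := by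
      rw [hconj]; exact ((Unitary.conjStarAlgAut ℂ _ S).map_star' _).symm
    simp only [s, Set.mem_ofPred_eq]
    rw [hconj_star, hconj, isBoundedBelowWith_conjStarAlgAut_iff,
      isBoundedBelowWith_conjStarAlgAut_iff]
  have hω₂ : ω₂ ∈ s :=
    Set.eq_univ_iff_forall.mp (eq_univ_of_isClosed_of_dense_orbit hs hT ⟨h₁, h₂⟩ hmin) ω₂
  exact isUnit_of_isBoundedBelowWith_of_star hω₂.1 hω₂.2

theorem spectrum_constant_of_minimal_covariant_general
    {Ω : Type*} [MetricSpace Ω]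
    (T : Ω ≃ₜ Ω)
    (hmin : ∀ ω : Ω, Dense {x : Ω | ∃ n : ℤ, x = (T.toEquiv ^ n) ω})
    (S : lp (fun _ : ℤ => ℂ) 2 →L[ℂ] lp (fun _ : ℤ => ℂ) 2)
    (hSunitary : S ∈ unitary (lp (fun _ : ℤ => ℂ) 2 →L[ℂ] lp (fun _ : ℤ => ℂ) 2))
    (U : Ω → (lp (fun _ : ℤ => ℂ) 2 →L[ℂ] lp (fun _ : ℤ => ℂ) 2))
    (hcov : ∀ ω, U (T ω) = S * U ω * star S)
    (hstrong : ∀ (ωn : ℕ → Ω) (ω : Ω), Tendsto ωn atTop (nhds ω) →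
      ∀ ψ : lp (fun _ : ℤ => ℂ) 2,
        Tendsto (fun n => U (ωn n) ψ) atTop (nhds (U ω ψ)) ∧
        Tendsto (fun n => (star (U (ωn n))) ψ) atTop (nhds ((star (U ω)) ψ))) :
    ∀ ω₁ ω₂ : Ω, spectrum ℂ (U ω₁) = spectrum ℂ (U ω₂) := by
  have hsubset (ω₁ ω₂ : Ω) : spectrum ℂ (U ω₂) ⊆ spectrum ℂ (U ω₁) :=
    spectrum_subset_of_covariant_of_dense_orbit (hmin ω₁) ⟨S, hSunitary⟩ hcov hstrong ω₂
  exact fun ω₁ ω₂ => (hsubset ω₂ ω₁).antisymm (hsubset ω₁ ω₂)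

/-- If `T` is a minimal homeomorphism of a compact metric space `Ω`, `S` is the bilateral
shift on `ℓ²(ℤ)`, and `ω ↦ U_ω` is a covariant family of unitary operators
(`U_{Tω} = S U_ω S*`) which is strongly continuous together with adjoints, then the
spectrum `σ(U_ω)` is independent of `ω`. -/
theorem spectrum_constant_of_minimal_covariant
    {Ω : Type*} [MetricSpace Ω] [CompactSpace Ω]
    (T : Ω ≃ₜ Ω)
    (hmin : ∀ ω : Ω, Dense {x : Ω | ∃ n : ℤ, x = (T.toEquiv ^ n) ω})
    (S : lp (fun _ : ℤ => ℂ) 2 →L[ℂ] lp (fun _ : ℤ => ℂ) 2)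
    (hSunitary : S ∈ unitary (lp (fun _ : ℤ => ℂ) 2 →L[ℂ] lp (fun _ : ℤ => ℂ) 2))
    (hSshift : ∀ (ψ : lp (fun _ : ℤ => ℂ) 2) (n : ℤ), (S ψ) n = ψ (n - 1))
    (U : Ω → (lp (fun _ : ℤ => ℂ) 2 →L[ℂ] lp (fun _ : ℤ => ℂ) 2))
    (hUunitary : ∀ ω, U ω ∈ unitary (lp (fun _ : ℤ => ℂ) 2 →L[ℂ] lp (fun _ : ℤ => ℂ) 2))
    (hcov : ∀ ω, U (T ω) = S * U ω * star S)
    (hstrong : ∀ (ωn : ℕ → Ω) (ω : Ω), Tendsto ωn atTop (nhds ω) →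
      ∀ ψ : lp (fun _ : ℤ => ℂ) 2,
        Tendsto (fun n => U (ωn n) ψ) atTop (nhds (U ω ψ)) ∧
        Tendsto (fun n => (star (U (ωn n))) ψ) atTop (nhds ((star (U ω)) ψ))) :
    ∀ ω₁ ω₂ : Ω, spectrum ℂ (U ω₁) = spectrum ℂ (U ω₂) :=
  spectrum_constant_of_minimal_covariant_general T hmin S hSunitary U hcov hstrong
end
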